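/- Let N and f be positive integers with f ∣ N, and assume it is not the case that both 2 ∣ f and the 2-adic valuation of N/f equals 1. Define ψ_f(n) := ψ(f·n)/ψ(f). Then ψ(f) · (β * ψ_f)(N/f) ≥ N/ν(N), as rational numbers. -/

import Mathlib

/-!
Write `b = v_p(f)` and `c = v_p(N/f)`. Since `ψ_f` is multiplicative and
`ψ(p^b) ψ_f(p^k) = ψ(p^(b+k))`, both sides factor over the primes dividing `N`, and the
local factor on the right is the truncated second difference
`ψ(p^(b+c)) - 2 ψ(p^(b+c-1)) + ψ(p^(b+c-2))`, keeping only the terms whose exponent is at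
least `b`. Comparing it with `p^(b+c) / ν(p^(b+c))` is elementary; the comparison fails only
for `p = 2`, `c = 1`, `b ≥ 1`, where the local factor vanishes.
-/

noncomputable def psi : ArithmeticFunction ℚ :=
  ⟨fun n => (n : ℚ) * ∏ p ∈ n.primeFactors, (1 + 1 / (p : ℚ)), by simp⟩

noncomputable def psiSub (f : ℕ) : ArithmeticFunction ℚ :=
  ⟨fun n => psi (f * n) / psi f, by simp⟩

open ArithmeticFunction Finset

namespace ArithmeticFunction

theorem IsMultiplicative.map_mul_mul_mul_of_coprime {R : Type*} [CommMonoidWithZero R]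
    {g : ArithmeticFunction R} (hg : g.IsMultiplicative) (f : ℕ) {m n : ℕ} (hmn : m.Coprime n) :
    g (f * (m * n)) * g f = g (f * m) * g (f * n) := by
  have h := hg.lcm_apply_mul_gcd_apply (x := f * m) (y := f * n)
  rwa [Nat.lcm_mul_left, Nat.gcd_mul_left, hmn.lcm_eq_mul, hmn.gcd_eq_one, mul_one] at h

theorem IsMultiplicative.map_eq_prod_of_primeFactors_subset {R : Type*} [CommMonoidWithZero R]
    {g : ArithmeticFunction R} (hg : g.IsMultiplicative) {n : ℕ} (hn : n ≠ 0) {s : Finset ℕ}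
    (hs : n.primeFactors ⊆ s) : g n = ∏ p ∈ s, g (p ^ n.factorization p) := by
  rw [hg.multiplicative_factorization g hn]
  exact Finsupp.prod_of_support_subset _ (by simpa using hs) _ fun _ _ => by simp [hg.map_one]

theorem IsMultiplicative.natCast_div_eq_prod_of_primeFactors_subset {R : Type*} [Semifield R]
    {g : ArithmeticFunction R} (hg : g.IsMultiplicative) {n : ℕ} (hn : n ≠ 0) {s : Finset ℕ}
    (hs : n.primeFactors ⊆ s) :
    (n : R) / g n = ∏ p ∈ s, (p : R) ^ n.factorization p / g (p ^ n.factorization p) := by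
  have h := (isMultiplicative_id.natCast.pdiv hg).map_eq_prod_of_primeFactors_subset hn hs
  simpa only [pdiv_apply, natCoe_apply, id_apply, Nat.cast_pow] using h

theorem mul_apply_prime_pow {R : Type*} [Semiring R] (f g : ArithmeticFunction R) {p : ℕ}
    (hp : p.Prime) (c : ℕ) :
    (f * g) (p ^ c) = ∑ i ∈ range (c + 1), f (p ^ i) * g (p ^ (c - i)) := by
  rw [mul_apply, Nat.sum_divisorsAntidiagonal (f := fun d e => f d * g e),
    Nat.sum_divisors_prime_pow hp]
  refine sum_congr rfl fun i hi => ?_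
  rw [Nat.pow_div (Nat.lt_succ_iff.1 (mem_range.1 hi)) hp.pos]

end ArithmeticFunction

theorem psi_apply (n : ℕ) : psi n = n * ∏ p ∈ n.primeFactors, (1 + 1 / (p : ℚ)) := rfl

theorem psi_pos {n : ℕ} (hn : n ≠ 0) : 0 < psi n := by
  rw [psi_apply]
  exact mul_pos (by positivity) (prod_pos fun p _ => by positivity)

theorem natCast_le_psi (n : ℕ) : (n : ℚ) ≤ psi n :=
  le_mul_of_one_le_right n.cast_nonneg (one_le_prod fun p _ => by simp)

theorem isMultiplicative_psi : psi.IsMultiplicative := by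
  refine IsMultiplicative.iff_ne_zero.2 ⟨by simp [psi_apply], fun hm hn hmn => ?_⟩
  rw [psi_apply, psi_apply, psi_apply, Nat.primeFactors_mul hm hn,
    prod_union hmn.disjoint_primeFactors, Nat.cast_mul]
  ring

theorem psi_prime_pow_succ {p : ℕ} (hp : p.Prime) (k : ℕ) :
    psi (p ^ (k + 1)) = (p : ℚ) ^ k * (p + 1) := by
  have : (p : ℚ) ≠ 0 := by exact_mod_cast hp.ne_zero
  rw [psi_apply, Nat.primeFactors_prime_pow k.succ_ne_zero hp, prod_singleton]
  field_simp
  push_cast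
  ring

theorem psiSub_apply (f n : ℕ) : psiSub f n = psi (f * n) / psi f := rfl

theorem isMultiplicative_psiSub {f : ℕ} (hf : f ≠ 0) : (psiSub f).IsMultiplicative := by
  have hψf := (psi_pos hf).ne'
  refine ⟨by simp [psiSub_apply, hψf], fun {m n} hmn => ?_⟩
  rw [psiSub_apply, psiSub_apply, psiSub_apply, div_mul_div_comm,
    ← isMultiplicative_psi.map_mul_mul_mul_of_coprime f hmn, mul_div_mul_right _ _ hψf]

theorem psi_mul_psiSub_prime_pow {f p : ℕ} (hf : f ≠ 0) (hp : p.Prime) (k : ℕ) :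
    psi (p ^ f.factorization p) * psiSub f (p ^ k) = psi (p ^ (f.factorization p + k)) := by
  have hcop : (ordCompl[p] f).Coprime (p ^ k) := (Nat.coprime_ordCompl hp hf).symm.pow_right k
  have h := isMultiplicative_psi.map_mul_mul_mul_of_coprime (p ^ f.factorization p) hcop
  rw [← mul_assoc, Nat.ordProj_mul_ordCompl_eq_self, ← pow_add] at h
  rw [psiSub_apply, mul_div_assoc', div_eq_iff (psi_pos hf).ne', mul_comm, h, mul_comm]

section Beta

variable {R : Type*} [CommRing R] {β : ArithmeticFunction R} {p : ℕ}

theorem beta_mul_apply_prime (g : ArithmeticFunction R) (hp : p.Prime) (h0 : β 1 = 1)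
    (h1 : β p = -2) (hg : g 1 = 1) : (β * g) p = g p - 2 := by
  rw [← pow_one p, mul_apply_prime_pow β g hp, sum_range_succ, sum_range_one]
  simp [h0, h1, hg, sub_eq_add_neg, mul_comm]

theorem beta_mul_apply_prime_pow_add_two (g : ArithmeticFunction R) (hp : p.Prime)
    (h0 : β 1 = 1) (h1 : β p = -2) (h2 : β (p ^ 2) = 1) (h3 : ∀ r, 3 ≤ r → β (p ^ r) = 0)
    (k : ℕ) : (β * g) (p ^ (k + 2)) = g (p ^ (k + 2)) - 2 * g (p ^ (k + 1)) + g (p ^ k) := by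
  have htail : ∑ i ∈ range k, β (p ^ (i + 3)) * g (p ^ (k + 2 - (i + 3))) = 0 :=
    sum_eq_zero fun i _ => by rw [h3 _ (by omega), zero_mul]
  rw [mul_apply_prime_pow β g hp, sum_range_succ', sum_range_succ', sum_range_succ', htail]
  simp [h0, h1, h2, sub_eq_add_neg, add_comm, add_left_comm]

end Beta

theorem three_le_of_prime_of_ne_two {p : ℕ} (hp : p.Prime) (hp2 : p ≠ 2) : (3 : ℚ) ≤ p := by
  have := hp.two_le
  exact_mod_cast (show 3 ≤ p by omega)

section Nu

variable {ν : ArithmeticFunction ℚ} {p : ℕ} (hν2 : ∀ r : ℕ, 1 ≤ r → ν (2 ^ r) = 4)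
    (hνp : ∀ p r : ℕ, p.Prime → p ≠ 2 → 1 ≤ r → ν (p ^ r) = 1 + 2 / ((p : ℚ) - 2))
include hν2 hνp

theorem prime_pow_div_nu (hp : p.Prime) (n : ℕ) :
    (p : ℚ) ^ (n + 1) / ν (p ^ (n + 1)) = if p = 2 then (p : ℚ) ^ n / 2 else p ^ n * (p - 2) := by
  split_ifs with hp2
  · subst hp2
    rw [hν2 _ (by omega)]
    ring
  · have : (p : ℚ) - 2 ≠ 0 := by linarith [three_le_of_prime_of_ne_two hp hp2]
    have : (p : ℚ) ≠ 0 := by exact_mod_cast hp.ne_zero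
    have hν : 1 + 2 / ((p : ℚ) - 2) = p / (p - 2) := by
      field_simp
      ring
    rw [hνp p _ hp hp2 (by omega), hν, div_div_eq_mul_div, pow_succ]
    field_simp

theorem prime_pow_div_nu_nonneg (hp : p.Prime) (n : ℕ) :
    0 ≤ (p : ℚ) ^ (n + 1) / ν (p ^ (n + 1)) := by
  rw [prime_pow_div_nu hν2 hνp hp]
  split_ifs with hp2
  · positivity
  · have := three_le_of_prime_of_ne_two hp hp2
    exact mul_nonneg (by positivity) (by linarith)

theorem prime_pow_div_nu_le_psi (hp : p.Prime) (n : ℕ) :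
    (p : ℚ) ^ (n + 1) / ν (p ^ (n + 1)) ≤ psi (p ^ (n + 1)) := by
  rw [prime_pow_div_nu hν2 hνp hp, psi_prime_pow_succ hp]
  split_ifs with hp2
  · subst hp2
    norm_num
    linarith [pow_pos (two_pos : (0 : ℚ) < 2) n]
  · gcongr
    linarith

theorem prime_pow_div_nu_le_psi_sub_two_mul_psi (hp : p.Prime) (n : ℕ) (hexc : p = 2 → n = 0) :
    (p : ℚ) ^ (n + 1) / ν (p ^ (n + 1)) ≤ psi (p ^ (n + 1)) - 2 * psi (p ^ n) := by
  rw [prime_pow_div_nu hν2 hνp hp]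
  rcases n with _ | n
  · rw [psi_prime_pow_succ hp, pow_zero, pow_zero, isMultiplicative_psi.map_one]
    split_ifs with hp2
    · subst hp2
      norm_num
    · linarith
  · have hp2 : p ≠ 2 := fun h => by simpa using hexc h
    have hp3 := three_le_of_prime_of_ne_two hp hp2
    rw [if_neg hp2, psi_prime_pow_succ hp, psi_prime_pow_succ hp, pow_succ]
    nlinarith [pow_pos (by exact_mod_cast hp.pos : (0 : ℚ) < p) n]

theorem prime_pow_div_nu_le_psi_sub_two_mul_psi_add_psi (hp : p.Prime) (n : ℕ) :
    (p : ℚ) ^ (n + 2) / ν (p ^ (n + 2)) ≤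
      psi (p ^ (n + 2)) - 2 * psi (p ^ (n + 1)) + psi (p ^ n) := by
  have hp0 : (0 : ℚ) < p := by exact_mod_cast hp.pos
  have hpn := pow_pos hp0 n
  have hψ : (p : ℚ) ^ n ≤ psi (p ^ n) := by exact_mod_cast natCast_le_psi (p ^ n)
  rw [prime_pow_div_nu hν2 hνp hp, psi_prime_pow_succ hp, psi_prime_pow_succ hp, pow_succ]
  split_ifs with hp2
  · subst hp2
    norm_num at hψ ⊢
    linarith
  · have hp1 : (1 : ℚ) ≤ p := by exact_mod_cast hp.one_le
    nlinarith [mul_le_mul_of_nonneg_left hp1 hpn.le]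

theorem prime_pow_div_nu_le_psi_mul_beta_mul_psiSub {β : ArithmeticFunction ℚ}
    (hβ : β.IsMultiplicative) (hβ1 : β p = -2) (hβ2 : β (p ^ 2) = 1)
    (hβ3 : ∀ r, 3 ≤ r → β (p ^ r) = 0) {f : ℕ} (hf : f ≠ 0) (hp : p.Prime) (c : ℕ)
    (hc : f.factorization p + c ≠ 0) (hexc : p = 2 → c = 1 → f.factorization p = 0) :
    (p : ℚ) ^ (f.factorization p + c) / ν (p ^ (f.factorization p + c)) ≤
      psi (p ^ f.factorization p) * (β * psiSub f) (p ^ c) := by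
  have hψ := psi_mul_psiSub_prime_pow hf hp
  have hψ1 := (isMultiplicative_psiSub hf).map_one
  rcases c with _ | _ | k
  · rw [add_zero] at hc ⊢
    obtain ⟨n, hn⟩ := Nat.exists_eq_add_one_of_ne_zero hc
    rw [pow_zero, (hβ.mul (isMultiplicative_psiSub hf)).map_one, mul_one, hn]
    exact prime_pow_div_nu_le_psi hν2 hνp hp n
  · have hψp : psi (p ^ f.factorization p) * psiSub f p = psi (p ^ (f.factorization p + 1)) := by
      simpa using hψ 1
    rw [pow_one, beta_mul_apply_prime _ hp hβ.map_one hβ1 hψ1, mul_sub, hψp,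
      mul_comm _ (2 : ℚ)]
    exact prime_pow_div_nu_le_psi_sub_two_mul_psi hν2 hνp hp _ fun hp2 => hexc hp2 rfl
  · rw [beta_mul_apply_prime_pow_add_two _ hp hβ.map_one hβ1 hβ2 hβ3,
      mul_add, mul_sub, mul_left_comm, hψ, hψ, hψ, ← add_assoc, ← add_assoc]
    exact prime_pow_div_nu_le_psi_sub_two_mul_psi_add_psi hν2 hνp hp _

end Nu

/-- Let `β` be the multiplicative arithmetic function with `β(p) = -2`, `β(p^2) = 1`
and `β(p^r) = 0` for `r ≥ 3`, and let `ν` be the multiplicative arithmetic function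
with `ν(2^r) = 4` and `ν(p^r) = 1 + 2/(p-2)` for odd primes `p` (and all `r ≥ 1`).
Let `N` and `f` be positive integers with `f ∣ N`, and assume it is not the case that
both `2 ∣ f` and `v₂(N/f) = 1`. Then `ψ(f) · (β * ψ_f)(N/f) ≥ N/ν(N)` as rational
numbers, where `ψ_f(n) := ψ(f·n)/ψ(f)`. -/
theorem psi_mul_beta_mul_psiSub_ge (β ν : ArithmeticFunction ℚ)
    (hβ : β.IsMultiplicative)
    (hβ1 : ∀ p : ℕ, p.Prime → β p = -2)
    (hβ2 : ∀ p : ℕ, p.Prime → β (p ^ 2) = 1)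
    (hβ3 : ∀ p r : ℕ, p.Prime → 3 ≤ r → β (p ^ r) = 0)
    (hν : ν.IsMultiplicative)
    (hν2 : ∀ r : ℕ, 1 ≤ r → ν (2 ^ r) = 4)
    (hνp : ∀ p r : ℕ, p.Prime → p ≠ 2 → 1 ≤ r → ν (p ^ r) = 1 + 2 / ((p : ℚ) - 2))
    (N f : ℕ) (hN : 0 < N) (hf : 0 < f) (hfN : f ∣ N)
    (hexc : ¬ (2 ∣ f ∧ (N / f).factorization 2 = 1)) :
    (N : ℚ) / ν N ≤ psi f * (β * psiSub f) (N / f) := by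
  obtain ⟨m, rfl⟩ := hfN
  rw [Nat.mul_div_cancel_left m hf] at hexc ⊢
  have hm : m ≠ 0 := right_ne_zero_of_mul hN.ne'
  have hsupp (d : ℕ) (hd : d ∣ f * m) : d.primeFactors ⊆ (f * m).primeFactors :=
    Nat.primeFactors_mono hd hN.ne'
  rw [hν.natCast_div_eq_prod_of_primeFactors_subset hN.ne' subset_rfl,
    isMultiplicative_psi.map_eq_prod_of_primeFactors_subset hf.ne' (hsupp f (dvd_mul_right f m)),
    (hβ.mul (isMultiplicative_psiSub hf.ne')).map_eq_prod_of_primeFactors_subset hm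
      (hsupp m (dvd_mul_left m f)), ← prod_mul_distrib]
  have hexp (p : ℕ) (hp : p ∈ (f * m).primeFactors) : (f * m).factorization p ≠ 0 := by
    rwa [← Finsupp.mem_support_iff, Nat.support_factorization]
  refine prod_le_prod (fun p hp => ?_) fun p hp => ?_
  · obtain ⟨n, hn⟩ := Nat.exists_eq_add_one_of_ne_zero (hexp p hp)
    rw [hn]
    exact prime_pow_div_nu_nonneg hν2 hνp (Nat.prime_of_mem_primeFactors hp) n
  · have hp' := Nat.prime_of_mem_primeFactors hp
    have hpm := hexp p hp
    rw [Nat.factorization_mul hf.ne' hm, Finsupp.add_apply] at hpm ⊢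
    refine prime_pow_div_nu_le_psi_mul_beta_mul_psiSub hν2 hνp hβ (hβ1 p hp') (hβ2 p hp')
      (hβ3 p · hp') hf.ne' hp' _ hpm fun hp2 hm2 => ?_
    subst hp2
    by_contra h2f
    exact hexc ⟨Nat.dvd_of_factorization_pos h2f, hm2⟩
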